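/- For every real u ∈ [0, 1] and β ≥ 2, the inequality 4u(1 - u)/(β + 2(1 - u)²) + 2 ≤ 2/(√(β(β + 2)) - β) holds, and the bound is tight: the supremum of the left-hand side over u ∈ [0,1] equals 2/(√(β(β+2)) - β). -/
import Mathlib


/-- For β ≥ 2 and f(u) = 4u(1-u)/(β + 2(1-u)²) + 2 on [0,1]:
f(u) ≤ 2/(√(β(β+2)) - β) for all u ∈ [0,1], and this bound is tight: the
supremum of f over [0,1] equals 2/(√(β(β+2)) - β). -/
theorem sup_of_f_on_unit_interval
    (β : ℝ) (hβ : 2 ≤ β)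
    (f : ℝ → ℝ)
    (hf : ∀ u, f u = 4 * u * (1 - u) / (β + 2 * (1 - u) ^ 2) + 2) :
    (∀ u ∈ Set.Icc (0 : ℝ) 1, f u ≤ 2 / (Real.sqrt (β * (β + 2)) - β)) ∧
    IsLUB (f '' Set.Icc (0 : ℝ) 1) (2 / (Real.sqrt (β * (β + 2)) - β)) := by
  have hβ0 : (0:ℝ) < β := by linarith
  set s := Real.sqrt (β * (β + 2)) with hs
  have hs0 : 0 ≤ s := Real.sqrt_nonneg _
  have hs2 : s ^ 2 = β * (β + 2) := Real.sq_sqrt (by positivity)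
  have hsβ : β < s := by nlinarith
  set t := s - β with htdef
  have ht : 0 < t := by simp only [htdef]; linarith
  have ht2 : t < 2 := by nlinarith
  have htsq : t ^ 2 = 2 * β - 2 * β * t := by
    simp only [htdef]; linear_combination hs2
  -- upper bound
  have hub : ∀ u ∈ Set.Icc (0 : ℝ) 1, f u ≤ 2 / t := by
    intro u hu
    have hD : 0 < β + 2 * (1 - u) ^ 2 := by positivity
    rw [hf]
    rw [div_add' _ _ _ (ne_of_gt hD), div_le_div_iff₀ hD ht]
    nlinarith [sq_nonneg (t - 2 * (1 - u))]
  -- value at u₀ = 1 - t/2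
  have hu₀mem : (1 - t / 2) ∈ Set.Icc (0 : ℝ) 1 := by
    constructor <;> [linarith; linarith]
  have hval : f (1 - t / 2) = 2 / t := by
    rw [hf]
    have hD : β + 2 * (1 - (1 - t / 2)) ^ 2 ≠ 0 := by positivity
    field_simp
    ring_nf
    nlinarith [htsq]
  refine ⟨hub, ⟨?_, ?_⟩⟩
  · rintro x ⟨u, hu, rfl⟩
    exact hub u hu
  · intro b hb
    have := hb ⟨1 - t / 2, hu₀mem, rfl⟩
    rw [hval] at this
    exact this
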